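/- Let F be a probability distribution on ℝ with mean zero that is heavy on left, i.e., ∫ min(|x|,a)·sign(x) dF(x) ≤ 0 for all a > 0. Then for every λ ≥ 0, ∫ exp(λx - (λ²/2)x²) dF(x) ≤ 1, and consequently for a compound Poisson process Y_t = Σ_{k=1}^{N_t} η_k with i.i.d. jumps η_k ~ F independent of the Poisson process N with rate κ, the compensator S̃(λ)_t = κ t ∫ (exp(λx - λ²x²/2) - 1 - λx) dF(x) is nonpositive for all t, λ ≥ 0. -/

import Mathlib

/-!
Writing `E c = exp (-c - c²/2)`, one has `exp (x - x²/2) ≤ 1 + sign x * (1 - E |x|)`: equality for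
`x ≤ 0`, and `cosh x ≤ exp (x²/2)` for `x > 0`. The function `1 - E` is a mixture of the functions
`c ↦ min c a`, namely `1 - E c = ∫₀^∞ min c a * (2a + a²) E a da`, so by Fubini
`∫ sign x * (1 - E |x|) dF` is a nonnegative mixture of the integrals `∫ min |x| a * sign x dF`,
which are `≤ 0` by heaviness on the left. A general `λ > 0` reduces to `λ = 1` because the law of
`λ X` is again heavy on the left; the compensator bound then follows from the mean being zero.
-/

open MeasureTheory Set Filter Topology

def HeavyOnLeft (μ : Measure ℝ) : Prop :=
  ∀ a > (0 : ℝ), ∫ x, min |x| a * Real.sign x ∂μ ≤ 0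

@[fun_prop]
lemma Real.measurable_sign : Measurable Real.sign :=
  Measurable.ite measurableSet_Iio measurable_const
    (Measurable.ite measurableSet_Ioi measurable_const measurable_const)

lemma Real.abs_sign_le_one (x : ℝ) : |Real.sign x| ≤ 1 := by
  rcases Real.sign_apply_eq x with h | h | h <;> simp [h]

lemma Real.sign_mul_of_pos {l : ℝ} (hl : 0 < l) (x : ℝ) : Real.sign (l * x) = Real.sign x := by
  rcases lt_trichotomy x 0 with hx | rfl | hx
  · rw [Real.sign_of_neg hx, Real.sign_of_neg (mul_neg_of_pos_of_neg hl hx)]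
  · simp
  · rw [Real.sign_of_pos hx, Real.sign_of_pos (mul_pos hl hx)]

lemma HeavyOnLeft.map_const_mul {μ : Measure ℝ} (hμ : HeavyOnLeft μ) {l : ℝ} (hl : 0 < l) :
    HeavyOnLeft (μ.map (l * ·)) := by
  intro a ha
  have hmeas : Measurable fun y : ℝ => min |y| a * Real.sign y := by fun_prop
  have hscale (x : ℝ) :
      min |l * x| a * Real.sign (l * x) = l * (min |x| (a / l) * Real.sign x) := by
    rw [Real.sign_mul_of_pos hl, abs_mul, abs_of_pos hl, ← mul_assoc, mul_min_of_nonneg _ _ hl.le,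
      mul_div_cancel₀ _ hl.ne']
  rw [integral_map (measurable_const_mul l).aemeasurable hmeas.aestronglyMeasurable]
  simp_rw [hscale]
  rw [integral_const_mul]
  exact mul_nonpos_of_nonneg_of_nonpos hl.le (hμ _ (div_pos ha hl))

noncomputable def expNegQuad (c : ℝ) : ℝ := Real.exp (-c - c ^ 2 / 2)

noncomputable def expNegQuadWeight (a : ℝ) : ℝ := (2 * a + a ^ 2) * expNegQuad a

lemma expNegQuad_zero : expNegQuad 0 = 1 := by simp [expNegQuad]

lemma expNegQuad_pos (c : ℝ) : 0 < expNegQuad c := Real.exp_pos _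

@[fun_prop]
lemma continuous_expNegQuad : Continuous expNegQuad := by
  unfold expNegQuad; fun_prop

lemma continuous_expNegQuadWeight : Continuous expNegQuadWeight := by
  unfold expNegQuadWeight; fun_prop

lemma expNegQuadWeight_nonneg {a : ℝ} (ha : 0 ≤ a) : 0 ≤ expNegQuadWeight a :=
  mul_nonneg (by positivity) (expNegQuad_pos a).le

lemma hasDerivAt_expNegQuad (c : ℝ) : HasDerivAt expNegQuad (-(1 + c) * expNegQuad c) c := by
  have h := ((hasDerivAt_id' c).fun_neg.fun_sub ((hasDerivAt_pow 2 c).div_const 2)).exp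
  exact h.congr_deriv (by simp only [expNegQuad]; ring)

lemma hasDerivAt_neg_one_add_mul_expNegQuad (a : ℝ) :
    HasDerivAt (fun a => -((1 + a) * expNegQuad a)) (expNegQuadWeight a) a := by
  have h := (((hasDerivAt_id' a).const_add 1).fun_mul (hasDerivAt_expNegQuad a)).fun_neg
  exact h.congr_deriv (by simp only [expNegQuadWeight]; ring)

lemma hasDerivAt_neg_one_add_add_sq_mul_expNegQuad (a : ℝ) :
    HasDerivAt (fun a => -((1 + a + a ^ 2) * expNegQuad a)) (a * expNegQuadWeight a) a := by
  have h := ((((hasDerivAt_id' a).const_add 1).fun_add (hasDerivAt_pow 2 a)).fun_mul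
    (hasDerivAt_expNegQuad a)).fun_neg
  exact h.congr_deriv (by simp only [expNegQuadWeight]; ring)

lemma tendsto_pow_mul_expNegQuad_atTop (n : ℕ) :
    Tendsto (fun a => a ^ n * expNegQuad a) atTop (𝓝 0) := by
  refine squeeze_zero' ?_ ?_ (Real.tendsto_pow_mul_exp_neg_atTop_nhds_zero n)
  · filter_upwards [eventually_ge_atTop 0] with a ha
    exact mul_nonneg (pow_nonneg ha n) (expNegQuad_pos a).le
  · filter_upwards [eventually_ge_atTop 0] with a ha
    exact mul_le_mul_of_nonneg_left (Real.exp_le_exp.mpr (by nlinarith)) (pow_nonneg ha n)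

lemma tendsto_neg_one_add_mul_expNegQuad_atTop :
    Tendsto (fun a => -((1 + a) * expNegQuad a)) atTop (𝓝 0) := by
  have h := ((tendsto_pow_mul_expNegQuad_atTop 0).add (tendsto_pow_mul_expNegQuad_atTop 1)).neg
  simp only [pow_zero, pow_one, one_mul, add_zero, neg_zero] at h
  exact h.congr fun a => by ring

lemma tendsto_neg_one_add_add_sq_mul_expNegQuad_atTop :
    Tendsto (fun a => -((1 + a + a ^ 2) * expNegQuad a)) atTop (𝓝 0) := by
  have h := (((tendsto_pow_mul_expNegQuad_atTop 0).add (tendsto_pow_mul_expNegQuad_atTop 1)).add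
    (tendsto_pow_mul_expNegQuad_atTop 2)).neg
  simp only [pow_zero, pow_one, one_mul, add_zero, neg_zero] at h
  exact h.congr fun a => by ring

lemma integrableOn_expNegQuadWeight_Ioi {c : ℝ} (hc : 0 ≤ c) :
    IntegrableOn expNegQuadWeight (Ioi c) :=
  integrableOn_Ioi_deriv_of_nonneg' (fun a _ => hasDerivAt_neg_one_add_mul_expNegQuad a)
    (fun _ ha => expNegQuadWeight_nonneg (hc.trans (le_of_lt ha)))
    tendsto_neg_one_add_mul_expNegQuad_atTop

lemma integral_expNegQuadWeight_Ioi {c : ℝ} (hc : 0 ≤ c) :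
    ∫ a in Ioi c, expNegQuadWeight a = (1 + c) * expNegQuad c := by
  rw [integral_Ioi_of_hasDerivAt_of_nonneg' (fun a _ => hasDerivAt_neg_one_add_mul_expNegQuad a)
    (fun _ ha => expNegQuadWeight_nonneg (hc.trans (le_of_lt ha)))
    tendsto_neg_one_add_mul_expNegQuad_atTop]
  ring

lemma integrableOn_mul_expNegQuadWeight_Ioi :
    IntegrableOn (fun a => a * expNegQuadWeight a) (Ioi 0) :=
  integrableOn_Ioi_deriv_of_nonneg' (fun a _ => hasDerivAt_neg_one_add_add_sq_mul_expNegQuad a)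
    (fun _ ha => mul_nonneg (le_of_lt ha) (expNegQuadWeight_nonneg (le_of_lt ha)))
    tendsto_neg_one_add_add_sq_mul_expNegQuad_atTop

lemma integral_mul_expNegQuadWeight (c : ℝ) :
    ∫ a in (0)..c, a * expNegQuadWeight a = 1 - (1 + c + c ^ 2) * expNegQuad c := by
  rw [intervalIntegral.integral_eq_sub_of_hasDerivAt
    (fun a _ => hasDerivAt_neg_one_add_add_sq_mul_expNegQuad a)
    ((continuous_id.mul continuous_expNegQuadWeight).intervalIntegrable 0 c)]
  rw [expNegQuad_zero]
  ring

lemma integral_min_mul_expNegQuadWeight {c : ℝ} (hc : 0 ≤ c) :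
    ∫ a in Ioi 0, min c a * expNegQuadWeight a = 1 - expNegQuad c := by
  have hlow : EqOn (fun a => min c a * expNegQuadWeight a) (fun a => a * expNegQuadWeight a)
      (Ioc 0 c) := fun a ha => by simp only [min_eq_right ha.2]
  have hhigh : EqOn (fun a => min c a * expNegQuadWeight a) (fun a => c * expNegQuadWeight a)
      (Ioi c) := fun a (ha : c < a) => by simp only [min_eq_left ha.le]
  have hint_low : IntegrableOn (fun a => min c a * expNegQuadWeight a) (Ioc 0 c) :=
    ((continuous_const.min continuous_id).mul continuous_expNegQuadWeight).integrableOn_Ioc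
  have hint_high : IntegrableOn (fun a => min c a * expNegQuadWeight a) (Ioi c) :=
    IntegrableOn.congr_fun ((integrableOn_expNegQuadWeight_Ioi hc).const_mul c)
      hhigh.symm measurableSet_Ioi
  rw [← Ioc_union_Ioi_eq_Ioi hc,
    setIntegral_union (Ioc_disjoint_Ioi le_rfl) measurableSet_Ioi hint_low hint_high,
    setIntegral_congr_fun measurableSet_Ioc hlow, setIntegral_congr_fun measurableSet_Ioi hhigh,
    ← intervalIntegral.integral_of_le hc, integral_mul_expNegQuadWeight, integral_const_mul,
    integral_expNegQuadWeight_Ioi hc]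
  ring

lemma HeavyOnLeft.integral_sign_mul_integral_min_mul_nonpos {μ : Measure ℝ} [IsFiniteMeasure μ]
    (hμ : HeavyOnLeft μ) {w : ℝ → ℝ} (hw_meas : Measurable w) (hw : ∀ a > 0, 0 ≤ w a)
    (haw : IntegrableOn (fun a => a * w a) (Ioi 0)) :
    ∫ x, Real.sign x * (∫ a in Ioi 0, min |x| a * w a) ∂μ ≤ 0 := by
  set f : ℝ → ℝ → ℝ := fun x a => min |x| a * Real.sign x * w a
  have hf : Integrable (Function.uncurry f) (μ.prod (volume.restrict (Ioi 0))) := by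
    refine ((integrable_const (1 : ℝ)).mul_prod haw.norm).mono' ?_ ?_
    · exact Measurable.aestronglyMeasurable (by fun_prop)
    · refine Eventually.of_forall fun p => ?_
      have hmin : |min |p.1| p.2| ≤ |p.2| := by
        rcases le_total 0 p.2 with h | h
        · rw [abs_of_nonneg (le_min (abs_nonneg _) h), abs_of_nonneg h]; exact min_le_right _ _
        · rw [min_eq_right (h.trans (abs_nonneg _))]
      simp only [Function.uncurry, f, Real.norm_eq_abs, abs_mul, one_mul]
      calc |min |p.1| p.2| * |Real.sign p.1| * |w p.2| ≤ |p.2| * 1 * |w p.2| := by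
            gcongr; exact Real.abs_sign_le_one _
        _ = |p.2| * |w p.2| := by ring
  calc ∫ x, Real.sign x * (∫ a in Ioi 0, min |x| a * w a) ∂μ
      = ∫ x, (∫ a in Ioi 0, f x a) ∂μ := by
        refine integral_congr_ae (Eventually.of_forall fun x => ?_)
        simp only [f, ← integral_const_mul]
        congr 1 with a
        ring
    _ = ∫ a in Ioi 0, ∫ x, f x a ∂μ := integral_integral_swap hf
    _ = ∫ a in Ioi 0, (∫ x, min |x| a * Real.sign x ∂μ) * w a := by
        simp only [f, integral_mul_const]
    _ ≤ 0 := setIntegral_nonpos measurableSet_Ioi fun a ha =>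
        mul_nonpos_of_nonpos_of_nonneg (hμ a ha) (hw a ha)

lemma Real.exp_sub_sq_div_two_add_exp_neg_sub_sq_div_two_le_two (x : ℝ) :
    Real.exp (x - x ^ 2 / 2) + Real.exp (-x - x ^ 2 / 2) ≤ 2 :=
  calc Real.exp (x - x ^ 2 / 2) + Real.exp (-x - x ^ 2 / 2)
      = 2 * Real.cosh x * Real.exp (-(x ^ 2 / 2)) := by
        rw [Real.cosh_eq, sub_eq_add_neg, sub_eq_add_neg, Real.exp_add, Real.exp_add]; ring
    _ ≤ 2 * Real.exp (x ^ 2 / 2) * Real.exp (-(x ^ 2 / 2)) := by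
        gcongr; exact Real.cosh_le_exp_half_sq x
    _ = 2 := by rw [mul_assoc, ← Real.exp_add, add_neg_cancel, Real.exp_zero, mul_one]

lemma exp_sub_sq_div_two_le_one_add_sign_mul (x : ℝ) :
    Real.exp (x - x ^ 2 / 2) ≤ 1 + Real.sign x * (1 - expNegQuad |x|) := by
  rcases lt_trichotomy x 0 with hx | rfl | hx
  · rw [Real.sign_of_neg hx, abs_of_neg hx, expNegQuad, neg_neg, neg_sq]
    linarith
  · simp
  · rw [Real.sign_of_pos hx, abs_of_pos hx, expNegQuad]
    linarith [Real.exp_sub_sq_div_two_add_exp_neg_sub_sq_div_two_le_two x]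

lemma integrable_exp_mul_sub_sq (μ : Measure ℝ) [IsFiniteMeasure μ] (l : ℝ) :
    Integrable (fun x => Real.exp (l * x - l ^ 2 / 2 * x ^ 2)) μ := by
  refine Integrable.of_bound (Measurable.aestronglyMeasurable (by fun_prop)) (Real.exp (1 / 2))
    (ae_of_all _ fun x => ?_)
  rw [Real.norm_of_nonneg (Real.exp_pos _).le, Real.exp_le_exp]
  nlinarith [sq_nonneg (l * x - 1)]

lemma integrable_sign_mul_one_sub_expNegQuad_abs (μ : Measure ℝ) [IsFiniteMeasure μ] :
    Integrable (fun x => Real.sign x * (1 - expNegQuad |x|)) μ := by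
  have hmeas : Measurable fun x => Real.sign x * (1 - expNegQuad |x|) := by fun_prop
  refine Integrable.of_bound hmeas.aestronglyMeasurable 1 (ae_of_all _ fun x => ?_)
  have hE_le : expNegQuad |x| ≤ 1 := Real.exp_le_one_iff.mpr (by nlinarith [abs_nonneg x])
  have hE_pos := expNegQuad_pos |x|
  rw [Real.norm_eq_abs, abs_mul, ← one_mul 1]
  exact mul_le_mul (Real.abs_sign_le_one x) (abs_le.mpr ⟨by linarith, by linarith⟩)
    (abs_nonneg _) zero_le_one

lemma HeavyOnLeft.integral_exp_sub_sq_div_two_le_one {μ : Measure ℝ} [IsProbabilityMeasure μ]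
    (hμ : HeavyOnLeft μ) : ∫ x, Real.exp (x - x ^ 2 / 2) ∂μ ≤ 1 := by
  have hg := integrable_sign_mul_one_sub_expNegQuad_abs μ
  have hg_nonpos : ∫ x, Real.sign x * (1 - expNegQuad |x|) ∂μ ≤ 0 := by
    simpa only [integral_min_mul_expNegQuadWeight (abs_nonneg _)] using
      hμ.integral_sign_mul_integral_min_mul_nonpos continuous_expNegQuadWeight.measurable
        (fun _ ha => expNegQuadWeight_nonneg ha.le) integrableOn_mul_expNegQuadWeight_Ioi
  have hexp : Integrable (fun x => Real.exp (x - x ^ 2 / 2)) μ :=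
    (integrable_exp_mul_sub_sq μ 1).congr (ae_of_all _ fun x => by ring_nf)
  calc ∫ x, Real.exp (x - x ^ 2 / 2) ∂μ
      ≤ ∫ x, (1 + Real.sign x * (1 - expNegQuad |x|)) ∂μ :=
        integral_mono hexp ((integrable_const 1).add hg) exp_sub_sq_div_two_le_one_add_sign_mul
    _ = 1 + ∫ x, Real.sign x * (1 - expNegQuad |x|) ∂μ := by
        rw [integral_add (integrable_const 1) hg, integral_const, probReal_univ, one_smul]
    _ ≤ 1 := by linarith

lemma HeavyOnLeft.integral_exp_mul_sub_sq_le_one {μ : Measure ℝ} [IsProbabilityMeasure μ]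
    (hμ : HeavyOnLeft μ) {l : ℝ} (hl : 0 ≤ l) :
    ∫ x, Real.exp (l * x - l ^ 2 / 2 * x ^ 2) ∂μ ≤ 1 := by
  rcases hl.eq_or_lt with rfl | hl
  · simp
  have hmap : AEMeasurable (l * ·) μ := (measurable_const_mul l).aemeasurable
  have := Measure.isProbabilityMeasure_map hmap
  have hexp_meas : Measurable fun y : ℝ => Real.exp (y - y ^ 2 / 2) := by fun_prop
  calc ∫ x, Real.exp (l * x - l ^ 2 / 2 * x ^ 2) ∂μ
      = ∫ x, Real.exp (l * x - (l * x) ^ 2 / 2) ∂μ := by congr 1 with x; ring_nf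
    _ = ∫ y, Real.exp (y - y ^ 2 / 2) ∂μ.map (l * ·) :=
        (integral_map hmap hexp_meas.aestronglyMeasurable).symm
    _ ≤ 1 := (hμ.map_const_mul hl).integral_exp_sub_sq_div_two_le_one

theorem heavy_on_left_compensator_nonpos
    (F : Measure ℝ) [IsProbabilityMeasure F]
    (hint : Integrable (fun x : ℝ => x) F)
    (hmean : ∫ x, x ∂F = 0)
    (hheavy : ∀ a > (0 : ℝ), ∫ x, min |x| a * Real.sign x ∂F ≤ 0) :
    (∀ l : ℝ, 0 ≤ l → ∫ x, Real.exp (l * x - l ^ 2 / 2 * x ^ 2) ∂F ≤ 1) ∧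
    (∀ κ t l : ℝ, 0 ≤ κ → 0 ≤ t → 0 ≤ l →
      κ * t * ∫ x, (Real.exp (l * x - l ^ 2 / 2 * x ^ 2) - 1 - l * x) ∂F ≤ 0) := by
  have hmgf (l : ℝ) (hl : 0 ≤ l) : ∫ x, Real.exp (l * x - l ^ 2 / 2 * x ^ 2) ∂F ≤ 1 :=
    HeavyOnLeft.integral_exp_mul_sub_sq_le_one hheavy hl
  refine ⟨hmgf, fun κ t l hκ ht hl => ?_⟩
  have hexp := integrable_exp_mul_sub_sq F l
  have hexp_sub : Integrable (fun x => Real.exp (l * x - l ^ 2 / 2 * x ^ 2) - 1) F :=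
    hexp.sub (integrable_const 1)
  have hcentered : ∫ x, (Real.exp (l * x - l ^ 2 / 2 * x ^ 2) - 1 - l * x) ∂F
      = ∫ x, Real.exp (l * x - l ^ 2 / 2 * x ^ 2) ∂F - 1 := by
    rw [integral_sub hexp_sub (hint.const_mul l),
      integral_sub hexp (integrable_const 1), integral_const_mul, hmean]
    simp
  rw [hcentered]
  exact mul_nonpos_of_nonneg_of_nonpos (mul_nonneg hκ ht) (by linarith [hmgf l hl])
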